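/- Let 𝔤 = 𝔥 ⊕ 𝔪₁ ⊕ 𝔪₂ ⊕ 𝔪₃ be a generalized Wallach decomposition as above, with 𝔨₁ = 𝔥 ⊕ 𝔪₁ (a subalgebra). Suppose F is an Ad(H)-invariant (α₁,α₂)-Minkowski norm on 𝔪 with splitting (𝔪₁⊕𝔪₂) ⊕ 𝔪₃, and suppose for every nonzero ṽ ∈ 𝔪₂⊕𝔪₃ there is u ∈ 𝔥 with g_ṽ(ṽ, [ṽ+u, v₁]_𝔪) = 0 for all v₁ ∈ 𝔪₁ (the geodesic orbit condition restricted to 𝔪₁ directions). Then the restriction F̃ = F|_{𝔪₂⊕𝔪₃} satisfies g_ṽ^{F̃}(ṽ, [x, ṽ]) = 0 for all x ∈ 𝔨₁ and all nonzero ṽ ∈ 𝔪₂⊕𝔪₃. -/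

import Mathlib

open RealInnerProductSpace

lemma even_deriv_zero (f : ℝ → ℝ) (h : ∀ t, f (-t) = f t) : deriv f 0 = 0 := by
  by_cases hd : DifferentiableAt ℝ f 0
  · have hfe : (fun t => f (-t)) = f := funext h
    have h2 : deriv (fun t => f (-t)) 0 = -deriv f (-0) := deriv_comp_neg f 0
    rw [hfe, neg_zero] at h2
    linarith
  · exact deriv_zero_of_not_differentiableAt hd


/-- for a generalized Wallach decomposition with `𝔨₁ = 𝔥 ⊕ 𝔪₁`, if the
geodesic-orbit condition holds restricted to `𝔪₁`-directions, then the restriction of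
`F` to `𝔪₂ ⊕ 𝔪₃` satisfies `g_vt(vt, [x, vt]) = 0` for all `x ∈ 𝔨₁` (the bracket
`[x, vt]` lies in `𝔪₂ ⊕ 𝔪₃`, where `g^F = g^F̃`). -/
theorem stmt14
    (L : Type*) [NormedAddCommGroup L] [InnerProductSpace ℝ L] [FiniteDimensional ℝ L]
    (B : L →ₗ[ℝ] L →ₗ[ℝ] L)   -- the Lie bracket
    (hanti : ∀ x y : L, B x y = - B y x)
    (hjacobi : ∀ x y z : L, B (B x y) z + B (B y z) x + B (B z x) y = 0)
    (had : ∀ x y z : L, ⟪B x y, z⟫ = -⟪y, B x z⟫)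
    (𝔥 𝔪₁ 𝔪₂ 𝔪₃ : Submodule ℝ L)
    (h𝔥 : ∀ x ∈ 𝔥, ∀ y ∈ 𝔥, B x y ∈ 𝔥)
    (hdecomp : 𝔥 ⊔ 𝔪₁ ⊔ 𝔪₂ ⊔ 𝔪₃ = ⊤)
    (horth𝔥1 : ∀ x ∈ 𝔥, ∀ y ∈ 𝔪₁, ⟪x, y⟫ = 0)
    (horth𝔥2 : ∀ x ∈ 𝔥, ∀ y ∈ 𝔪₂, ⟪x, y⟫ = 0)
    (horth𝔥3 : ∀ x ∈ 𝔥, ∀ y ∈ 𝔪₃, ⟪x, y⟫ = 0)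
    (horth12 : ∀ x ∈ 𝔪₁, ∀ y ∈ 𝔪₂, ⟪x, y⟫ = 0)
    (horth13 : ∀ x ∈ 𝔪₁, ∀ y ∈ 𝔪₃, ⟪x, y⟫ = 0)
    (horth23 : ∀ x ∈ 𝔪₂, ∀ y ∈ 𝔪₃, ⟪x, y⟫ = 0)
    -- generalized Wallach bracket relations
    (hbr𝔥 : ∀ u ∈ 𝔥, (∀ x ∈ 𝔪₁, B u x ∈ 𝔪₁) ∧ (∀ x ∈ 𝔪₂, B u x ∈ 𝔪₂) ∧
      (∀ x ∈ 𝔪₃, B u x ∈ 𝔪₃))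
    (hbr11 : ∀ x ∈ 𝔪₁, ∀ y ∈ 𝔪₁, B x y ∈ 𝔥)
    (hbr22 : ∀ x ∈ 𝔪₂, ∀ y ∈ 𝔪₂, B x y ∈ 𝔥)
    (hbr33 : ∀ x ∈ 𝔪₃, ∀ y ∈ 𝔪₃, B x y ∈ 𝔥)
    (hbr12 : ∀ x ∈ 𝔪₁, ∀ y ∈ 𝔪₂, B x y ∈ 𝔪₃)
    (hbr13 : ∀ x ∈ 𝔪₁, ∀ y ∈ 𝔪₃, B x y ∈ 𝔪₂)
    (hbr23 : ∀ x ∈ 𝔪₂, ∀ y ∈ 𝔪₃, B x y ∈ 𝔪₁)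
    -- the standard (α₁,α₂)-norm with splitting (𝔪₁⊕𝔪₂) ⊕ 𝔪₃
    (φ : ℝ → ℝ) (hφ : ContDiff ℝ (⊤ : ℕ∞) φ) (hφpos : ∀ s ∈ Set.Icc (0:ℝ) 1, 0 < φ s)
    (F : L → ℝ)
    (hF : ∀ u : L, F u = ‖u‖ * φ (‖(↑(Submodule.orthogonalProjection 𝔪₃ u) : L)‖ / ‖u‖))
    (hFpos : ∀ u : L, u ≠ 0 → 0 < F u)
    (hFconvex : ∀ y : L, y ≠ 0 → ∀ w : L, w ≠ 0 →
      0 < deriv (deriv (fun r : ℝ => F (y + r • w) ^ 2 / 2)) 0)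
    -- Ad(H)-invariance of F: g_v(v,[u',v]) = 0 for u' ∈ 𝔥
    (hAdInv : ∀ u' ∈ 𝔥, ∀ v : L, v ≠ 0 →
      (1 / 2) * deriv (fun t : ℝ => F (v + t • B u' v) ^ 2) 0 = 0)
    -- g.o. condition restricted to 𝔪₁-directions
    (hGO : ∀ vt ∈ 𝔪₂ ⊔ 𝔪₃, vt ≠ (0:L) → ∃ u ∈ 𝔥, ∀ v₁ ∈ 𝔪₁,
      (1 / 2) * deriv (fun t : ℝ =>
        F (vt + t • (↑(Submodule.orthogonalProjection (𝔥ᗮ) (B (vt + u) v₁)) : L)) ^ 2) 0 = 0) :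
    ∀ vt ∈ 𝔪₂ ⊔ 𝔪₃, vt ≠ (0:L) → ∀ x ∈ 𝔥 ⊔ 𝔪₁,
      (1 / 2) * deriv (fun t : ℝ => F (vt + t • B x vt) ^ 2) 0 = 0 := by
  
  intro vt hvt hvtne x hx
  obtain ⟨a, ha, b, hb, hab⟩ := Submodule.mem_sup.mp hvt
  have hvtm1 : ∀ w ∈ 𝔪₁, (⟪vt, w⟫ : ℝ) = 0 := by
    intro w hw
    have e1 : (⟪a, w⟫:ℝ) = 0 := by rw [real_inner_comm]; exact horth12 w hw a ha
    have e2 : (⟪b, w⟫:ℝ) = 0 := by rw [real_inner_comm]; exact horth13 w hw b hb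
    rw [← hab, inner_add_left, e1, e2]
    ring
  have hproj0 : ∀ w : L, (∀ y ∈ 𝔪₃, (⟪w, y⟫:ℝ) = 0) →
      (↑(Submodule.orthogonalProjection 𝔪₃ w) : L) = 0 := by
    intro w hw
    have hmem : w ∈ 𝔪₃ᗮ := by
      rw [Submodule.mem_orthogonal]
      intro y hy
      rw [real_inner_comm]; exact hw y hy
    rw [Submodule.orthogonalProjectionOnto_apply_of_mem_orthogonal hmem]
    rfl
  have keyA : ∀ w : L, (⟪vt, w⟫:ℝ) = 0 →
      (∀ t : ℝ, ‖(↑(Submodule.orthogonalProjection 𝔪₃ (vt + (-t) • w)) : L)‖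
        = ‖(↑(Submodule.orthogonalProjection 𝔪₃ (vt + t • w)) : L)‖) →
      deriv (fun t : ℝ => F (vt + t • w) ^ 2) 0 = 0 := by
    intro w hw hpw
    apply even_deriv_zero
    intro t
    have hn : ‖vt + (-t) • w‖ = ‖vt + t • w‖ := by
      have h1 : ‖vt + (-t) • w‖ ^ 2 = ‖vt + t • w‖ ^ 2 := by
        rw [norm_add_sq_real, norm_add_sq_real, real_inner_smul_right, real_inner_smul_right,
          hw, norm_smul, norm_smul]
        simp
      calc ‖vt + (-t) • w‖ = Real.sqrt (‖vt + (-t) • w‖ ^ 2) :=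
            (Real.sqrt_sq (norm_nonneg _)).symm
        _ = Real.sqrt (‖vt + t • w‖ ^ 2) := by rw [h1]
        _ = ‖vt + t • w‖ := Real.sqrt_sq (norm_nonneg _)
    rw [hF, hF, hn, hpw t]
  by_cases hpv : (↑(Submodule.orthogonalProjection 𝔪₃ vt) : L) = 0
  · -- Case 2: projection of vt onto 𝔪₃ vanishes; evenness argument
    have hiw : (⟪vt, B x vt⟫:ℝ) = 0 := by
      have h1 := had x vt vt
      have h2 : (⟪B x vt, vt⟫:ℝ) = ⟪vt, B x vt⟫ := real_inner_comm _ _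
      linarith
    have hpe : ∀ t : ℝ, ‖(↑(Submodule.orthogonalProjection 𝔪₃ (vt + (-t) • B x vt)) : L)‖
        = ‖(↑(Submodule.orthogonalProjection 𝔪₃ (vt + t • B x vt)) : L)‖ := by
      intro t
      have hmap : ∀ s : ℝ, (↑(Submodule.orthogonalProjection 𝔪₃ (vt + s • B x vt)) : L)
          = s • (↑(Submodule.orthogonalProjection 𝔪₃ (B x vt)) : L) := by
        intro s
        rw [map_add, map_smul, Submodule.coe_add, Submodule.coe_smul, hpv, zero_add]
      rw [hmap, hmap, neg_smul, norm_neg]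
    have hz := keyA (B x vt) hiw hpe
    rw [hz]
    ring
  · -- Case 1: projection of vt onto 𝔪₃ nonzero; F² is differentiable at vt
    set P : L →L[ℝ] L := 𝔪₃.subtypeL.comp (Submodule.orthogonalProjection 𝔪₃) with hPdef
    have hPapp : ∀ u : L, P u = (↑(Submodule.orthogonalProjection 𝔪₃ u) : L) := fun u => rfl
    set f2 : L → ℝ :=
      fun u => (‖u‖ * φ (‖(↑(Submodule.orthogonalProjection 𝔪₃ u) : L)‖ / ‖u‖)) ^ 2 with hf2
    have hnv : ‖vt‖ ≠ 0 := norm_ne_zero_iff.mpr hvtne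
    have hd1 : DifferentiableAt ℝ (fun u : L => ‖u‖) vt :=
      differentiableAt_id.norm ℝ hvtne
    have hd2 : DifferentiableAt ℝ
        (fun u : L => ‖(↑(Submodule.orthogonalProjection 𝔪₃ u) : L)‖) vt := by
      have h := (P.differentiableAt (x := vt)).norm ℝ (by rw [hPapp]; exact hpv)
      simpa [hPapp] using h
    have hd3 : DifferentiableAt ℝ
        (fun u : L => ‖(↑(Submodule.orthogonalProjection 𝔪₃ u) : L)‖ / ‖u‖) vt :=
      by simp only [div_eq_mul_inv]; exact hd2.mul (hd1.inv hnv)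
    have hdφ : DifferentiableAt ℝ
        (fun u : L => φ (‖(↑(Submodule.orthogonalProjection 𝔪₃ u) : L)‖ / ‖u‖)) vt := by
      have h := ((hφ.differentiable (by simp)).differentiableAt).comp vt hd3
      exact h
    have hd : DifferentiableAt ℝ f2 vt := (hd1.mul hdφ).pow 2
    have key : ∀ w : L, deriv (fun t : ℝ => F (vt + t • w) ^ 2) 0 = fderiv ℝ f2 vt w := by
      intro w
      have hline : HasDerivAt (fun t : ℝ => vt + t • w) w 0 := by
        have h := ((hasDerivAt_id (0:ℝ)).smul_const w).const_add vt
        simpa using h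
      have hfd : HasFDerivAt f2 (fderiv ℝ f2 vt) ((fun t : ℝ => vt + t • w) 0) := by
        simpa using hd.hasFDerivAt
      have hcomp := hfd.comp_hasDerivAt 0 hline
      have heq : (fun t : ℝ => F (vt + t • w) ^ 2) = (f2 ∘ fun t : ℝ => vt + t • w) := by
        funext t
        simp only [Function.comp_apply, hf2, hF]
      rw [heq]
      exact hcomp.deriv
    obtain ⟨u', hu', v₁, hv₁, hx'⟩ := Submodule.mem_sup.mp hx
    have hz1 : fderiv ℝ f2 vt (B u' vt) = 0 := by
      have h := hAdInv u' hu' vt hvtne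
      rw [key] at h
      linarith
    obtain ⟨u, hu, hGOu⟩ := hGO vt hvt hvtne
    have hBuv₁ : B u v₁ ∈ 𝔪₁ := (hbr𝔥 u hu).1 v₁ hv₁
    have hBav : B a v₁ ∈ 𝔪₃ := by
      rw [hanti]
      exact Submodule.neg_mem _ (hbr12 v₁ hv₁ a ha)
    have hBbv : B b v₁ ∈ 𝔪₂ := by
      rw [hanti]
      exact Submodule.neg_mem _ (hbr13 v₁ hv₁ b hb)
    have hBsplit : B vt v₁ = B a v₁ + B b v₁ := by
      rw [← hab, map_add, LinearMap.add_apply]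
    have hmemperp : B vt v₁ + B u v₁ ∈ 𝔥ᗮ := by
      rw [Submodule.mem_orthogonal]
      intro h hh
      rw [inner_add_right, hBsplit, inner_add_right,
        horth𝔥3 h hh _ hBav, horth𝔥2 h hh _ hBbv, horth𝔥1 h hh _ hBuv₁]
      ring
    have hprojeq : (↑(Submodule.orthogonalProjection 𝔥ᗮ (B (vt + u) v₁)) : L)
        = B vt v₁ + B u v₁ := by
      have hBadd : B (vt + u) v₁ = B vt v₁ + B u v₁ := by
        rw [map_add, LinearMap.add_apply]
      rw [hBadd]; exact Submodule.starProjection_eq_self_iff.mpr hmemperp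
    have hz2 : fderiv ℝ f2 vt (B vt v₁ + B u v₁) = 0 := by
      have h := hGOu v₁ hv₁
      rw [hprojeq, key] at h
      linarith
    have hz3 : fderiv ℝ f2 vt (B u v₁) = 0 := by
      rw [← key]
      apply keyA (B u v₁) (hvtm1 _ hBuv₁)
      intro t
      have hp0 : (↑(Submodule.orthogonalProjection 𝔪₃ (B u v₁)) : L) = 0 :=
        hproj0 _ (fun y hy => horth13 _ hBuv₁ y hy)
      have hmap : ∀ s : ℝ, (↑(Submodule.orthogonalProjection 𝔪₃ (vt + s • B u v₁)) : L)
          = (↑(Submodule.orthogonalProjection 𝔪₃ vt) : L) := by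
        intro s
        rw [map_add, map_smul, Submodule.coe_add, Submodule.coe_smul, hp0, smul_zero, add_zero]
      rw [hmap, hmap]
    have hz4 : fderiv ℝ f2 vt (B vt v₁) = 0 := by
      have h := (fderiv ℝ f2 vt).map_add (B vt v₁) (B u v₁)
      rw [hz2, hz3] at h
      linarith
    have hBx : B x vt = B u' vt + B v₁ vt := by
      rw [← hx', map_add, LinearMap.add_apply]
    have hz5 : fderiv ℝ f2 vt (B v₁ vt) = 0 := by
      rw [hanti v₁ vt, map_neg, hz4, neg_zero]
    rw [key, hBx, map_add, hz1, hz5]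
    ring
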